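/- arXiv:1511.08154 — 6 statements merged into one kernel-verified Lean document; each statement's English description precedes it below -/
import Mathlib

section
/- For every positive integer n, the number of distinct values in the set {⌊n/k⌋ : 1 ≤ k ≤ n} equals either 2⌊√n⌋ or 2⌊√n⌋ − 1. -/
/-- The set of approximate divisors of `n`: distinct values of `⌊n/k⌋` for `1 ≤ k ≤ n`. -/
def Sn (n : ℕ) : Finset ℕ := (Finset.Icc 1 n).image (fun k => n / k)

lemma key (n v : ℕ) (hv : 1 ≤ v) (h : v ≤ Nat.sqrt n) : n / (n / v) = v := by
  have hn : 1 ≤ n := le_trans hv (le_trans h (Nat.sqrt_le_self n))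
  have hvn : v ≤ n := le_trans h (Nat.sqrt_le_self n)
  have hq : 1 ≤ n / v := Nat.one_le_div_iff (by omega) |>.2 hvn
  have hsq : Nat.sqrt n ≤ n / v := by
    have hss := Nat.sqrt_le n
    have h2 : v * Nat.sqrt n ≤ n := le_trans (Nat.mul_le_mul_right _ h) hss
    exact (Nat.le_div_iff_mul_le (by omega)).2 (by rw [Nat.mul_comm]; exact h2)
  apply le_antisymm
  · by_contra hlt
    push_neg at hlt
    have h3 : (v + 1) * (n / v) ≤ n := by
      have := (Nat.le_div_iff_mul_le hq).1 hlt
      nlinarith [this]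
    have hmod := Nat.div_add_mod n v
    have hmodlt : n % v < v := Nat.mod_lt _ (by omega)
    -- v * (n/v) = n - n % v, and (v+1)*(n/v) = v*(n/v) + n/v ≤ n
    have : v * (n / v) + (n / v) ≤ n := by nlinarith [h3]
    omega
  · exact (Nat.le_div_iff_mul_le (by omega)).2 (by rw [Nat.mul_comm]; exact Nat.div_mul_le_self n v)

/-- The number of distinct values of `⌊n/k⌋`, `1 ≤ k ≤ n`, equals `2⌊√n⌋` or `2⌊√n⌋ - 1`. -/
theorem stmt_1 (n : ℕ) (hn : 0 < n) :
    (Sn n).card = 2 * Nat.sqrt n ∨ (Sn n).card = 2 * Nat.sqrt n - 1 := by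
  set s := Nat.sqrt n with hs
  have hs1 : 1 ≤ s := Nat.sqrt_pos.2 hn
  have hsn : s ≤ n := Nat.sqrt_le_self n
  set A : Finset ℕ := Finset.Icc 1 s with hA
  set B : Finset ℕ := (Finset.Icc 1 s).image (fun k => n / k) with hB
  have hSn : Sn n = A ∪ B := by
    ext x
    simp only [Sn, Finset.mem_image, Finset.mem_union, Finset.mem_Icc, hA, hB]
    constructor
    · rintro ⟨k, ⟨hk1, hk2⟩, rfl⟩
      by_cases hks : k ≤ s
      · exact Or.inr ⟨k, ⟨hk1, hks⟩, rfl⟩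
      · left
        push_neg at hks
        constructor
        · exact Nat.one_le_div_iff (by omega) |>.2 hk2
        · have hlt : n < (s + 1) * (s + 1) := Nat.lt_succ_sqrt n
          calc n / k ≤ n / (s + 1) := Nat.div_le_div_left hks (by omega)
            _ ≤ s := Nat.lt_succ_iff.1 (Nat.div_lt_of_lt_mul (by nlinarith))
    · rintro (⟨hx1, hx2⟩ | ⟨k, ⟨hk1, hk2⟩, rfl⟩)
      · refine ⟨n / x, ⟨Nat.one_le_div_iff (by omega) |>.2 (le_trans hx2 hsn), Nat.div_le_self n x⟩, ?_⟩
        exact key n x hx1 hx2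
      · exact ⟨k, ⟨hk1, le_trans hk2 hsn⟩, rfl⟩
  have hcardA : A.card = s := by simp [hA]
  have hcardB : B.card = s := by
    rw [hB, Finset.card_image_of_injOn ?_, Nat.card_Icc]
    · omega
    · intro k1 h1 k2 h2 he
      simp only [Finset.coe_Icc, Set.mem_Icc] at h1 h2
      have e1 := key n k1 h1.1 h1.2
      have e2 := key n k2 h2.1 h2.2
      simp only at he
      rw [he] at e1
      omega
  have hinter : (A ∩ B).card ≤ 1 := by
    have hsub : A ∩ B ⊆ {s} := by
      intro x hx
      simp only [Finset.mem_inter, Finset.mem_Icc, Finset.mem_image, hA, hB] at hx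
      obtain ⟨⟨hx1, hx2⟩, k, ⟨hk1, hk2⟩, rfl⟩ := hx
      have : n / s ≤ n / k := Nat.div_le_div_left hk2 (by omega)
      have hns : s ≤ n / s := by
        have := Nat.sqrt_le n
        exact (Nat.le_div_iff_mul_le (by omega)).2 this
      simp only [Finset.mem_singleton]
      omega
    calc (A ∩ B).card ≤ ({s} : Finset ℕ).card := Finset.card_le_card hsub
      _ = 1 := Finset.card_singleton s
  have hu := Finset.card_union_add_card_inter A B
  rw [hSn]
  omega
end

section
/- Let m = ⌊√n⌋. The sets S_n^- = {j : 1 ≤ j ≤ m} and S_n^+ = {⌊n/j⌋ : 1 ≤ j ≤ m} are disjoint if m(m+1) ≤ n < (m+1)², and have exactly one common element, namely m, if m² ≤ n < m(m+1). -/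
/-- Let `m = ⌊√n⌋`. The sets `S_n^- = {1,…,m}` and `S_n^+ = {⌊n/j⌋ : 1 ≤ j ≤ m}` are
disjoint if `m(m+1) ≤ n < (m+1)²`, and intersect in exactly the single element `m`
if `m² ≤ n < m(m+1)`. -/
theorem stmt_3 (n : ℕ) (hn : 0 < n) (m : ℕ) (hm : m = Nat.sqrt n) :
    (m * (m + 1) ≤ n ∧ n < (m + 1) ^ 2 →
      Disjoint (Finset.Icc 1 m) ((Finset.Icc 1 m).image (fun j => n / j))) ∧
    (m ^ 2 ≤ n ∧ n < m * (m + 1) →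
      Finset.Icc 1 m ∩ (Finset.Icc 1 m).image (fun j => n / j) = {m}) := by
  have hm1 : 1 ≤ m := by
    rw [hm]; exact Nat.sqrt_pos.mpr hn
  constructor
  · rintro ⟨h1, _⟩
    rw [Finset.disjoint_right]
    rintro a ha hb
    simp only [Finset.mem_image, Finset.mem_Icc] at ha hb
    obtain ⟨j, ⟨hj1, hjm⟩, rfl⟩ := ha
    have hjpos : 0 < j := hj1
    have : m + 1 ≤ n / j := by
      rw [Nat.le_div_iff_mul_le hjpos]
      calc (m + 1) * j ≤ (m + 1) * m := Nat.mul_le_mul_left _ hjm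
        _ = m * (m + 1) := Nat.mul_comm _ _
        _ ≤ n := h1
    omega
  · rintro ⟨h1, h2⟩
    have hdm : n / m = m := by
      refine Nat.le_antisymm ?_ ?_
      · exact Nat.lt_succ_iff.mp (Nat.div_lt_iff_lt_mul hm1 |>.mpr (by nlinarith))
      · exact Nat.le_div_iff_mul_le hm1 |>.mpr (by nlinarith)
    ext a
    simp only [Finset.mem_inter, Finset.mem_image, Finset.mem_Icc, Finset.mem_singleton]
    constructor
    · rintro ⟨⟨ha1, ham⟩, j, ⟨hj1, hjm⟩, rfl⟩
      have : n / m ≤ n / j := Nat.div_le_div_left hjm hj1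
      omega
    · rintro rfl
      exact ⟨⟨hm1, le_rfl⟩, _, ⟨hm1, le_rfl⟩, hdm⟩
end

section
/- The involution k ↦ ⌊n/k⌋ on S_n is order-reversing: if k₁ < k₂ ... k_s enumerate S_n = {⌊n/k⌋ : 1 ≤ k ≤ n} in increasing order (with s = #S_n), then ⌊n/k_i⌋ = k_{s+1−i} for all 1 ≤ i ≤ s. -/
/-- The increasing enumeration `k_1 < ⋯ < k_s` of `S_n` (0-indexed by `Fin s`). -/
noncomputable def kseq (n : ℕ) : Fin (Sn n).card → ℕ :=
  fun i => ((Sn n).orderIsoOfFin rfl i : ℕ)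

lemma key_div (n m : ℕ) (h1 : 1 ≤ m) (h2 : m ≤ n) : n / (n / (n / m)) = n / m := by
  have ha : 1 ≤ n / m := (Nat.one_le_div_iff h1).mpr h2
  set a := n / m with hadef
  have hb : m ≤ n / a := by
    rw [Nat.le_div_iff_mul_le ha]
    rw [mul_comm]
    exact Nat.div_mul_le_self n m
  have hb1 : 1 ≤ n / a := le_trans h1 hb
  apply le_antisymm
  · -- n / (n / a) ≤ a
    calc n / (n / a) ≤ n / m := Nat.div_le_div_left hb h1
    _ = a := rfl
  · -- a ≤ n / (n / a)
    rw [Nat.le_div_iff_mul_le hb1]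
    exact Nat.mul_div_le n a

lemma mem_Sn_iff (n x : ℕ) : x ∈ Sn n ↔ ∃ m, 1 ≤ m ∧ m ≤ n ∧ n / m = x := by
  simp [Sn, Finset.mem_image, Finset.mem_Icc, and_assoc]

lemma div_mem_Sn {n x : ℕ} (hn : 0 < n) (hx : x ∈ Sn n) : n / x ∈ Sn n := by
  rw [mem_Sn_iff] at hx ⊢
  obtain ⟨m, h1, h2, rfl⟩ := hx
  exact ⟨n / m, (Nat.one_le_div_iff h1).mpr h2, Nat.div_le_self n m, rfl⟩

lemma invol_Sn {n x : ℕ} (hx : x ∈ Sn n) : n / (n / x) = x := by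
  rw [mem_Sn_iff] at hx
  obtain ⟨m, h1, h2, rfl⟩ := hx
  exact key_div n m h1 h2

lemma anti_Sn {n x y : ℕ} (hx : x ∈ Sn n) (hy : y ∈ Sn n) (hxy : x < y) :
    n / y < n / x := by
  rcases lt_or_eq_of_le (Nat.div_le_div_left hxy.le (by
    rcases (mem_Sn_iff n x).mp hx with ⟨m, h1, h2, rfl⟩
    exact (Nat.one_le_div_iff h1).mpr h2)) with h | h
  · exact h
  · exfalso
    have := congrArg (fun t => n / t) h
    simp only [invol_Sn hx, invol_Sn hy] at this
    exact hxy.ne this.symm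

/-- The involution `k ↦ ⌊n/k⌋` reverses the increasing enumeration of `S_n`:
`⌊n/k_i⌋ = k_{s+1-i}` (with 0-indexing, `⌊n / kseq n i⌋ = kseq n i.rev`). -/
theorem stmt_5 (n : ℕ) (hn : 0 < n) :
    ∀ i : Fin (Sn n).card, n / kseq n i = kseq n i.rev := by
  have hmem : ∀ i : Fin (Sn n).card, kseq n i ∈ Sn n := fun i =>
    ((Sn n).orderIsoOfFin rfl i).prop
  have hmono : StrictMono (kseq n) := fun i j hij => by
    simpa [kseq] using ((Sn n).orderIsoOfFin rfl).strictMono hij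
  set f : Fin (Sn n).card → ℕ := fun j => n / kseq n j.rev with hf
  have hfmem : ∀ j, f j ∈ Sn n := fun j => div_mem_Sn hn (hmem j.rev)
  have hfmono : StrictMono f := fun j1 j2 h =>
    anti_Sn (hmem j2.rev) (hmem j1.rev) (hmono (Fin.rev_lt_rev.mpr h))
  have huniq : f = (Sn n).orderEmbOfFin rfl := by
    exact Finset.orderEmbOfFin_unique rfl hfmem hfmono
  intro i
  have := congrFun huniq i.rev
  simp only [hf, Fin.rev_rev] at this
  rw [this, kseq, Finset.coe_orderIsoOfFin_apply]
end

section
/- Let k_1 < ... < k_s enumerate S_n = {⌊n/k⌋ : 1 ≤ k ≤ n} and let U_n be the s × s matrix with entries U_{ij} = ⌊n/(k_i k_j)⌋. Then det(U_n) = ±1; more precisely det(U_n) = (−1)^{s(s−1)/2}. -/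
/-- Cardinal's matrix `U_n`, with `(i,j)` entry `⌊n/(k_i k_j)⌋`. -/
noncomputable def Umat (n : ℕ) : Matrix (Fin (Sn n).card) (Fin (Sn n).card) ℤ :=
  fun i j => (n / (kseq n i * kseq n j) : ℕ)

open Equiv Equiv.Perm Finset

/- ### Sign of the reversal permutation -/

def midEquiv (n : ℕ) : Fin n ≃ {x : Fin (n+1) // (x : ℕ) < n} where
  toFun x := ⟨x.castSucc, by simp⟩
  invFun y := ⟨(y.1 : ℕ), y.2⟩
  left_inv x := by ext; simp
  right_inv y := by ext; simp

lemma rev_decomp (n : ℕ) :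
    (Fin.revPerm : Perm (Fin (n+2))) =
      Equiv.Perm.decomposeFin.symm (Fin.last (n+1),
        (Fin.revPerm : Perm (Fin n)).extendDomain (midEquiv n)) := by
  ext i
  refine Fin.cases ?_ (fun x => ?_) i
  · simp [Fin.rev_zero]
  · rw [Equiv.Perm.decomposeFin_symm_apply_succ]
    by_cases hx : (x : ℕ) < n
    · rw [Equiv.Perm.extendDomain_apply_subtype _ (midEquiv n) hx]
      set y : Fin (n+1) := ↑((midEquiv n) (Fin.revPerm ((midEquiv n).symm ⟨x, hx⟩))) with hy
      have hyv : (y : ℕ) = n - 1 - (x : ℕ) := by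
        simp [hy, midEquiv, Fin.rev]
        omega
      rw [Equiv.swap_apply_of_ne_of_ne (Fin.succ_ne_zero y)
        (by rw [Ne, Fin.ext_iff]; simp [hyv, Fin.last]; omega)]
      simp [Fin.rev, hyv]
      omega
    · rw [Equiv.Perm.extendDomain_apply_not_subtype _ (midEquiv n) hx]
      have hx' : (x : ℕ) = n := by omega
      have : x.succ = Fin.last (n+1) := by ext; simp [hx', Fin.last]
      rw [this, Equiv.swap_apply_right]
      simp [Fin.rev, hx']

lemma sign_revPerm_eq (n : ℕ) :
    Equiv.Perm.sign (Fin.revPerm : Perm (Fin n)) = (-1) ^ (n * (n - 1) / 2) := by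
  induction n using Nat.twoStepInduction with
  | zero =>
    have : (Fin.revPerm : Perm (Fin 0)) = 1 := Subsingleton.elim _ _
    simp [this]
  | one =>
    have : (Fin.revPerm : Perm (Fin 1)) = 1 := Subsingleton.elim _ _
    simp [this]
  | more n ih _ =>
    rw [rev_decomp, Equiv.Perm.decomposeFin.symm_sign, Equiv.Perm.sign_extendDomain, ih]
    have hlast : (Fin.last (n+1)) ≠ 0 := by
      intro h; have := congrArg Fin.val h; simp [Fin.last] at this
    rw [if_neg hlast]
    have harith : (n + 2) * (n + 2 - 1) / 2 = n * (n - 1) / 2 + (2 * n + 1) := by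
      have e1 : n + 2 - 1 = n + 1 := by omega
      rw [e1]
      have h1 : (n + 2) * (n + 1) = n * (n - 1) + (2 * n + 1) * 2 := by
        cases n with
        | zero => norm_num
        | succ m =>
          have e2 : m + 1 - 1 = m := by omega
          rw [e2]; ring
      rw [h1, Nat.add_mul_div_right _ _ (by norm_num : 0 < 2)]
    rw [harith, pow_add]
    have : ((-1 : ℤˣ)) ^ (2 * n + 1) = -1 := Odd.neg_one_pow ⟨n, by ring⟩
    rw [this]
    exact mul_comm _ _

/- ### Number theory for Sn -/

lemma Sn_bounds {n d : ℕ} (hd : d ∈ Sn n) : 0 < d ∧ d ≤ n := by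
  simp only [Sn, Finset.mem_image, Finset.mem_Icc] at hd
  obtain ⟨k, ⟨hk1, hk2⟩, rfl⟩ := hd
  exact ⟨Nat.div_pos hk2 hk1, Nat.div_le_self n k⟩

lemma div_mem_Sn_s7 {n d : ℕ} (hd : d ∈ Sn n) : n / d ∈ Sn n := by
  obtain ⟨h1, h2⟩ := Sn_bounds hd
  exact Finset.mem_image.2 ⟨d, Finset.mem_Icc.2 ⟨h1, h2⟩, rfl⟩

lemma div_div_Sn {n d : ℕ} (hd : d ∈ Sn n) : n / (n / d) = d := by
  simp only [Sn, Finset.mem_image, Finset.mem_Icc] at hd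
  obtain ⟨k, ⟨hk1, hk2⟩, rfl⟩ := hd
  have hd1 : 0 < n / k := Nat.div_pos hk2 hk1
  have hq1 : 0 < n / (n / k) := Nat.div_pos (Nat.div_le_self n k) hd1
  apply le_antisymm
  · have hk : k ≤ n / (n / k) :=
      (Nat.le_div_iff_mul_le hd1).2 (by rw [mul_comm]; exact Nat.div_mul_le_self n k)
    exact Nat.div_le_div_left hk hk1
  · exact (Nat.le_div_iff_mul_le hq1).2
      (by rw [mul_comm]; exact Nat.div_mul_le_self n (n / k))

lemma div_strictAnti {n a b : ℕ} (ha : a ∈ Sn n) (hb : b ∈ Sn n) (hab : a < b) :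
    n / b < n / a := by
  have hle : n / b ≤ n / a := Nat.div_le_div_left hab.le (Sn_bounds ha).1
  rcases hle.lt_or_eq with h | h
  · exact h
  · exact absurd (by rw [← div_div_Sn ha, ← div_div_Sn hb, h] : b = a) hab.ne'

/- ### kseq facts -/

lemma kseq_eq (n : ℕ) : kseq n = ⇑((Sn n).orderEmbOfFin rfl) :=
  funext fun i => Finset.coe_orderIsoOfFin_apply _ _ _

lemma kseq_mem (n : ℕ) (i : Fin (Sn n).card) : kseq n i ∈ Sn n := by
  rw [kseq_eq]; exact Finset.orderEmbOfFin_mem _ _ _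

lemma kseq_strictMono (n : ℕ) : StrictMono (kseq n) := by
  rw [kseq_eq]; exact ((Sn n).orderEmbOfFin rfl).strictMono

lemma kseq_pos (n : ℕ) (i : Fin (Sn n).card) : 0 < kseq n i :=
  (Sn_bounds (kseq_mem n i)).1

lemma kseq_rev (n : ℕ) (i : Fin (Sn n).card) :
    n / kseq n i = kseq n i.rev := by
  have hg : (fun j : Fin (Sn n).card => n / kseq n j.rev) = ⇑((Sn n).orderEmbOfFin rfl) := by
    apply Finset.orderEmbOfFin_unique rfl
    · intro j; exact div_mem_Sn_s7 (kseq_mem n j.rev)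
    · intro j j' hjj'
      exact div_strictAnti (kseq_mem n j'.rev) (kseq_mem n j.rev)
        (kseq_strictMono n (by simpa using Fin.rev_lt_rev.2 hjj'))
  have := congrFun hg i.rev
  rw [Fin.rev_rev] at this
  rw [this, kseq_eq]

lemma Umat_apply (n : ℕ) (i j : Fin (Sn n).card) :
    Umat n i j = ((kseq n i.rev / kseq n j : ℕ) : ℤ) := by
  unfold Umat
  rw [← Nat.div_div_eq_div_mul, kseq_rev n i]

/- ### Main theorem -/

/-- `det U_n = ±1`; more precisely `det U_n = (-1)^{s(s-1)/2}` where `s = #S_n`. -/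
theorem stmt_7 (n : ℕ) (hn : 0 < n) :
    ((Umat n).det = 1 ∨ (Umat n).det = -1) ∧
    (Umat n).det = (-1 : ℤ) ^ ((Sn n).card * ((Sn n).card - 1) / 2) := by
  set s := (Sn n).card
  -- row-reversed matrix is lower triangular with unit diagonal
  have h1 : ((Umat n).submatrix (⇑(Fin.revPerm : Perm (Fin s))) id).det = 1 := by
    rw [Matrix.det_of_lowerTriangular]
    · have hdiag : ∀ i : Fin s, (Umat n).submatrix (⇑Fin.revPerm) id i i = 1 := by
        intro i
        simp only [Matrix.submatrix_apply, id_eq, Fin.revPerm_apply]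
        rw [Umat_apply, Fin.rev_rev, Nat.div_self (kseq_pos n i)]
        norm_num
      exact Finset.prod_eq_one fun i _ => hdiag i
    · intro i j hij
      simp only [Matrix.submatrix_apply, id_eq, Fin.revPerm_apply]
      rw [Umat_apply, Fin.rev_rev]
      have : kseq n i < kseq n j := kseq_strictMono n hij
      rw [Nat.div_eq_of_lt this]
      norm_num
  have h2 := Matrix.det_permute (Fin.revPerm : Perm (Fin s)) (Umat n)
  rw [h1, sign_revPerm_eq] at h2
  push_cast at h2
  have hdet : (Umat n).det = (-1 : ℤ) ^ (s * (s - 1) / 2) := by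
    have hsq : ((-1 : ℤ) ^ (s * (s - 1) / 2)) * ((-1 : ℤ) ^ (s * (s - 1) / 2)) = 1 := by
      rw [← pow_add]
      exact Even.neg_one_pow ⟨_, rfl⟩
    calc (Umat n).det = ((-1 : ℤ) ^ (s * (s - 1) / 2) * (-1 : ℤ) ^ (s * (s - 1) / 2))
          * (Umat n).det := by rw [hsq, one_mul]
      _ = (-1 : ℤ) ^ (s * (s - 1) / 2) * ((-1 : ℤ) ^ (s * (s - 1) / 2) * (Umat n).det) := by ring
      _ = (-1 : ℤ) ^ (s * (s - 1) / 2) := by rw [← h2, mul_one]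
  refine ⟨?_, hdet⟩
  rcases Nat.even_or_odd (s * (s - 1) / 2) with h | h
  · left; rw [hdet, h.neg_one_pow]
  · right; rw [hdet, h.neg_one_pow]
end

section
/- Assume that for every ε > 0 there is a constant C_ε with |M(x)| ≤ C_ε x^{1/2+ε} for all x ≥ 1. Then for every ε > 0, the Frobenius norm of the Mertens matrix satisfies ‖M_n‖_F² = O_ε(n^{1+ε}); in particular ‖M_n‖_F = O_ε(n^{1/2+ε}). -/
/-- The Mertens function `M(x) = ∑_{1 ≤ j ≤ x} μ(j)`, with `M(0) = 0`. -/
noncomputable def mertens (x : ℕ) : ℤ :=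
  ∑ j ∈ Finset.Icc 1 x, ArithmeticFunction.moebius j

/-- Cardinal's Mertens matrix `M_n` over `ℝ`. -/
noncomputable def MmatR (n : ℕ) : Matrix (Fin (Sn n).card) (Fin (Sn n).card) ℝ :=
  fun i j => (mertens (n / (kseq n i * kseq n j)) : ℝ)

lemma one_le_kseq (n : ℕ) (hn : 0 < n) (i : Fin (Sn n).card) : 1 ≤ kseq n i := by
  have h : kseq n i ∈ Sn n := ((Sn n).orderIsoOfFin rfl i).2
  simp only [Sn, Finset.mem_image, Finset.mem_Icc] at h
  obtain ⟨k, ⟨hk1, hk2⟩, hk⟩ := h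
  rw [← hk]
  exact (Nat.one_le_div_iff hk1).mpr hk2

lemma sum_kseq (n : ℕ) (f : ℕ → ℝ) : ∑ i, f (kseq n i) = ∑ m ∈ Sn n, f m := by
  rw [← Finset.sum_coe_sort (Sn n) f]
  exact Fintype.sum_equiv ((Sn n).orderIsoOfFin rfl).toEquiv _ _ (fun i => rfl)

/-- Assuming the RH-type bound `|M(x)| ≤ C_ε x^{1/2+ε}`, the squared Frobenius norm of
the Mertens matrix satisfies `‖M_n‖_F² = O_ε(n^{1+ε})`; in particular
`‖M_n‖_F = O_ε(n^{1/2+ε})`. -/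
theorem stmt_12
    (h : ∀ ε : ℝ, 0 < ε → ∃ C : ℝ, 0 < C ∧ ∀ x : ℕ, 1 ≤ x →
      |(mertens x : ℝ)| ≤ C * (x : ℝ) ^ ((1 : ℝ) / 2 + ε)) :
    ∀ ε : ℝ, 0 < ε →
      (∃ C : ℝ, 0 < C ∧ ∀ n : ℕ, 0 < n →
        (∑ i, ∑ j, (MmatR n i j) ^ 2) ≤ C * (n : ℝ) ^ ((1 : ℝ) + ε)) ∧
      (∃ C : ℝ, 0 < C ∧ ∀ n : ℕ, 0 < n →
        Real.sqrt (∑ i, ∑ j, (MmatR n i j) ^ 2) ≤ C * (n : ℝ) ^ ((1 : ℝ) / 2 + ε)) := by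
  intro ε hε
  obtain ⟨C, hC, hM⟩ := h (ε / 2) (by positivity)
  set p : ℝ := 1 + ε with hp
  have hsum : Summable (fun m : ℕ => ((m : ℝ) ^ p)⁻¹) :=
    Real.summable_nat_rpow_inv.mpr (by simp [hp]; linarith)
  set Z : ℝ := ∑' m : ℕ, ((m : ℝ) ^ p)⁻¹ with hZ
  have hZ0 : 0 ≤ Z := tsum_nonneg (fun m => by positivity)
  -- main squared bound
  have key : ∀ n : ℕ, 0 < n →
      (∑ i, ∑ j, (MmatR n i j) ^ 2) ≤ (C * (Z + 1)) ^ 2 * (n : ℝ) ^ p := by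
    intro n hn
    -- entrywise bound
    have entry : ∀ i j, (MmatR n i j) ^ 2 ≤
        C ^ 2 * (n : ℝ) ^ p * (((kseq n i : ℝ) ^ p)⁻¹ * ((kseq n j : ℝ) ^ p)⁻¹) := by
      intro i j
      set a := kseq n i with ha
      set b := kseq n j with hb
      have ha1 : 1 ≤ a := one_le_kseq n hn i
      have hb1 : 1 ≤ b := one_le_kseq n hn j
      have hK1 : 1 ≤ a * b := Nat.one_le_iff_ne_zero.mpr (by positivity)
      set x := n / (a * b) with hx
      by_cases hx0 : x = 0
      · have : MmatR n i j = 0 := by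
          simp [MmatR, ← ha, ← hb, ← hx, hx0, mertens]
        rw [this, zero_pow (two_ne_zero)]
        positivity
      · have hx1 : 1 ≤ x := Nat.one_le_iff_ne_zero.mpr hx0
        have h1 : (MmatR n i j) ^ 2 ≤ C ^ 2 * ((x : ℝ) ^ ((1:ℝ)/2 + ε/2)) ^ 2 := by
          have := hM x hx1
          have habs : MmatR n i j = (mertens x : ℝ) := rfl
          rw [habs, ← sq_abs]
          rw [← mul_pow]
          exact pow_le_pow_left₀ (abs_nonneg _) this 2
        have h2 : ((x : ℝ) ^ ((1:ℝ)/2 + ε/2)) ^ 2 = (x : ℝ) ^ p := by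
          rw [← Real.rpow_natCast ((x : ℝ) ^ ((1:ℝ)/2 + ε/2)) 2, ← Real.rpow_mul (by positivity)]
          norm_num [hp]
          ring_nf
        have h3 : (x : ℝ) ^ p ≤ (n : ℝ) ^ p * (((a : ℝ) ^ p)⁻¹ * ((b : ℝ) ^ p)⁻¹) := by
          have hxle : (x : ℝ) ≤ (n : ℝ) / ((a : ℝ) * (b : ℝ)) := by
            rw [hx]
            calc ((n / (a * b) : ℕ) : ℝ) ≤ (n : ℝ) / ((a * b : ℕ) : ℝ) := Nat.cast_div_le
            _ = (n : ℝ) / ((a : ℝ) * (b : ℝ)) := by push_cast; ring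
          calc (x : ℝ) ^ p ≤ ((n : ℝ) / ((a : ℝ) * (b : ℝ))) ^ p :=
                Real.rpow_le_rpow (by positivity) hxle (by positivity)
          _ = (n : ℝ) ^ p * (((a : ℝ) ^ p)⁻¹ * ((b : ℝ) ^ p)⁻¹) := by
              rw [Real.div_rpow (by positivity) (by positivity),
                  Real.mul_rpow (by positivity) (by positivity)]
              field_simp
        calc (MmatR n i j) ^ 2 ≤ C ^ 2 * ((x : ℝ) ^ ((1:ℝ)/2 + ε/2)) ^ 2 := h1
        _ = C ^ 2 * (x : ℝ) ^ p := by rw [h2]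
        _ ≤ C ^ 2 * ((n : ℝ) ^ p * (((a : ℝ) ^ p)⁻¹ * ((b : ℝ) ^ p)⁻¹)) := by
            exact mul_le_mul_of_nonneg_left h3 (by positivity)
        _ = C ^ 2 * (n : ℝ) ^ p * (((a : ℝ) ^ p)⁻¹ * ((b : ℝ) ^ p)⁻¹) := by ring
    have hZsum : (∑ i, ((kseq n i : ℝ) ^ p)⁻¹) ≤ Z := by
      rw [sum_kseq n (fun m => ((m : ℝ) ^ p)⁻¹)]
      exact Summable.sum_le_tsum (Sn n) (fun m _ => by positivity) hsum
    have hZsum0 : 0 ≤ ∑ i, ((kseq n i : ℝ) ^ p)⁻¹ :=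
      Finset.sum_nonneg (fun i _ => by positivity)
    calc (∑ i, ∑ j, (MmatR n i j) ^ 2)
        ≤ ∑ i, ∑ j, C ^ 2 * (n : ℝ) ^ p * (((kseq n i : ℝ) ^ p)⁻¹ * ((kseq n j : ℝ) ^ p)⁻¹) :=
          Finset.sum_le_sum (fun i _ => Finset.sum_le_sum (fun j _ => entry i j))
      _ = C ^ 2 * (n : ℝ) ^ p * ((∑ i, ((kseq n i : ℝ) ^ p)⁻¹) * (∑ j, ((kseq n j : ℝ) ^ p)⁻¹)) := by
          rw [Finset.sum_mul_sum]
          rw [Finset.mul_sum]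
          exact Finset.sum_congr rfl (fun i _ => by rw [Finset.mul_sum])
      _ ≤ C ^ 2 * (n : ℝ) ^ p * ((Z + 1) * (Z + 1)) := by
          apply mul_le_mul_of_nonneg_left _ (by positivity)
          exact mul_le_mul (hZsum.trans (by linarith)) (hZsum.trans (by linarith)) hZsum0
            (by linarith)
      _ = (C * (Z + 1)) ^ 2 * (n : ℝ) ^ p := by ring
  constructor
  · exact ⟨(C * (Z + 1)) ^ 2, by positivity, key⟩
  · refine ⟨C * (Z + 1), by positivity, fun n hn => ?_⟩
    have h1 := key n hn
    have hn1 : (1 : ℝ) ≤ (n : ℝ) := by exact_mod_cast hn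
    calc Real.sqrt (∑ i, ∑ j, (MmatR n i j) ^ 2)
        ≤ Real.sqrt ((C * (Z + 1)) ^ 2 * (n : ℝ) ^ p) := Real.sqrt_le_sqrt h1
      _ = (C * (Z + 1)) * (n : ℝ) ^ (p / 2) := by
          rw [Real.sqrt_mul (by positivity), Real.sqrt_sq (by positivity),
            Real.sqrt_eq_rpow, ← Real.rpow_mul (by positivity)]
          ring_nf
      _ ≤ (C * (Z + 1)) * (n : ℝ) ^ ((1:ℝ)/2 + ε) := by
          apply mul_le_mul_of_nonneg_left _ (by positivity)
          exact Real.rpow_le_rpow_of_exponent_le hn1 (by rw [hp]; linarith)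
end

section
/- For every k ∈ S_n with k < n, the successor k⁺ of k in S_n satisfies k⁺/k ≤ 4 + 2√2; consequently each entry just below the antidiagonal of Ũ_n⁻¹, which equals −⌊n/k⌋·k⁺/n, is bounded in absolute value by 4 + 2√2. -/
/-- For every `k ∈ S_n` with `k < n`, its successor `k⁺` in `S_n` (the least element of
`S_n` strictly greater than `k`) satisfies `k⁺/k ≤ 4 + 2√2`; consequently the entry of
`Ũ_n⁻¹` just below the antidiagonal is bounded in absolute value by
`⌊n/k⌋·k⁺/n ≤ (n/k)·k⁺/n = k⁺/k ≤ 4 + 2√2`. -/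
theorem stmt_17 (n : ℕ) (hn : 0 < n) :
    ∀ k ∈ Sn n, k < n →
      ∀ kp : ℕ, (kp ∈ Sn n ∧ k < kp ∧ ∀ m ∈ Sn n, k < m → kp ≤ m) →
        (kp : ℝ) / (k : ℝ) ≤ 4 + 2 * Real.sqrt 2 ∧
        ((n / k : ℕ) : ℝ) * (kp : ℝ) / (n : ℝ) ≤ 4 + 2 * Real.sqrt 2 := by
  intro k hk hkn kp ⟨hkp, hkkp, hmin⟩
  -- k ≥ 1
  have hk1 : 1 ≤ k := by
    simp only [Sn, Finset.mem_image, Finset.mem_Icc] at hk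
    obtain ⟨m, ⟨hm1, hmn⟩, rfl⟩ := hk
    exact Nat.one_le_div_iff (by omega) |>.2 hmn
  set q := n / (k + 1) with hq
  have hq1 : 1 ≤ q := Nat.one_le_div_iff (by omega) |>.2 (by omega)
  have hqn : q ≤ n := Nat.div_le_self _ _
  have hmSn : n / q ∈ Sn n := by
    simp only [Sn, Finset.mem_image, Finset.mem_Icc]
    exact ⟨q, ⟨hq1, hqn⟩, rfl⟩
  have hkm : k < n / q := by
    have : (k + 1) * q ≤ n := by
      have := Nat.div_mul_le_self n (k + 1)
      calc (k+1) * q = q * (k+1) := by ring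
        _ ≤ n := this
    have := (Nat.le_div_iff_mul_le (by omega : 0 < q)).2 this
    omega
  have hkpm : kp ≤ n / q := hmin _ hmSn hkm
  -- n < (q+1)(k+1)
  have hnlt : n < (q + 1) * (k + 1) := by
    have : n / (k + 1) < q + 1 := by omega
    exact (Nat.div_lt_iff_lt_mul (by omega : 0 < k + 1)).1 this
  -- kp * q ≤ n
  have hkpq : kp * q ≤ n := by
    calc kp * q ≤ (n / q) * q := Nat.mul_le_mul_right _ hkpm
      _ ≤ n := Nat.div_mul_le_self n q
  have hkp3 : kp ≤ 3 * k := by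
    have h1 : kp * q ≤ q * k + q + k := by nlinarith
    have h2 : q + k ≤ 2 * (q * k) := by nlinarith
    have h3 : kp * q ≤ 3 * k * q := by nlinarith
    exact Nat.le_of_mul_le_mul_right (by omega) (by omega : 0 < q)
  have hs2 : (0:ℝ) ≤ Real.sqrt 2 := Real.sqrt_nonneg 2
  have hkR : (0:ℝ) < (k:ℝ) := by exact_mod_cast hk1
  have hnR : (0:ℝ) < (n:ℝ) := by exact_mod_cast hn
  have hkp3R : (kp:ℝ) ≤ 3 * (k:ℝ) := by exact_mod_cast hkp3
  have hfirst : (kp : ℝ) / (k : ℝ) ≤ 4 + 2 * Real.sqrt 2 := by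
    rw [div_le_iff₀ hkR]
    nlinarith
  refine ⟨hfirst, ?_⟩
  have hfloor : ((n / k : ℕ) : ℝ) * (k : ℝ) ≤ (n : ℝ) := by
    have := Nat.div_mul_le_self n k
    exact_mod_cast this
  have hsecond : ((n / k : ℕ) : ℝ) * (kp : ℝ) / (n : ℝ) ≤ (kp : ℝ) / (k : ℝ) := by
    rw [div_le_div_iff₀ hnR hkR]
    have hkpR : (0:ℝ) ≤ (kp:ℝ) := Nat.cast_nonneg _
    nlinarith
  linarith
end
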